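/- arXiv:1809.02923 — 4 statements merged into one kernel-verified Lean document; each statement's English description precedes it below -/
import Mathlib

section
/- Let $x \in \mathbb{R}$ and $\xi < x$. Suppose $h(\cdot,\cdot)$ satisfies: $h(y,\xi)$ is continuously differentiable in $y$ on an interval containing $x$ away from $\xi$, the limit $h'_-(x) = \lim_{z \to x^-} h'_x(x,z)$ exists and is finite, and the mixed partial $h''_{x,z}(x,z)$ exists and is integrable on $[\xi, x)$. Let $f_-(x,\cdot)$ be a probability density on $(-\infty, x)$ that is strictly positive on $[\xi, x)$. Define the random variable $g = h'_-(x)$ if $z < \xi$ and $g = h'_-(x) - h''_{x,z}(x,z)/f_-(x,z)$ if $z \ge \xi$, where $z$ is drawn from density $f_-(x,\cdot)$. Then $\mathbb{E}_z[g] = h'_x(x,\xi)$, i.e., $h'_-(x) - \int_{\xi}^{x} h''_{x,z}(x,z)\,dz = h'_x(x,\xi)$. -/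
open MeasureTheory Set

/-- Unbiasedness of the comparison-based gradient estimator when `ξ < x`.
Here `hd z = h'_x(x,z)` (partial derivative of `h` in its first argument, viewed as a
function of the second argument `z`), `hdd z = h''_{x,z}(x,z)`, and `hm = h'_-(x)` is the
left limit of `hd` at `x`.  The estimator is `g z = hm` if `z < ξ` and
`g z = hm - hdd z / f z` if `z ≥ ξ`, with `z` drawn from the density `f = f_-(x,·)`
on `(-∞, x)`.  Its expectation equals `h'_x(x,ξ) = hd ξ`, via the identity
`hm - ∫_ξ^x hdd = hd ξ`. -/
theorem cba_gradient_unbiased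
    (x ξ : ℝ) (hξx : ξ < x)
    (hd hdd : ℝ → ℝ) (hm : ℝ)
    (hderiv : ∀ z ∈ Ico ξ x, HasDerivAt hd (hdd z) z)
    (hlim : Filter.Tendsto hd (nhdsWithin x (Iio x)) (nhds hm))
    (hint : IntegrableOn hdd (Ico ξ x))
    (f : ℝ → ℝ) (hfmeas : Measurable f)
    (hfnonneg : ∀ z, z < x → 0 ≤ f z)
    (hfpos : ∀ z ∈ Ico ξ x, 0 < f z)
    (hfone : (∫ z in Iio x, f z) = 1)
    (hginteg : IntegrableOn
      (fun z => (if z < ξ then hm else hm - hdd z / f z) * f z) (Iio x)) :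
    (∫ z in Iio x, (if z < ξ then hm else hm - hdd z / f z) * f z) = hd ξ ∧
      hm - (∫ z in ξ..x, hdd z) = hd ξ := by
  -- Second identity via FTC with limit at the right endpoint
  have hii : IntervalIntegrable hdd volume ξ x := by
    rw [intervalIntegrable_iff_integrableOn_Ico_of_le hξx.le]; exact hint
  have hFTC : (∫ z in ξ..x, hdd z) = hm - hd ξ := by
    apply intervalIntegral.integral_eq_sub_of_hasDerivAt_of_tendsto hξx
      (fun z hz => hderiv z ⟨hz.1.le, hz.2⟩) hii
    · exact ((hderiv ξ ⟨le_refl _, hξx⟩).continuousAt.tendsto).mono_left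
        nhdsWithin_le_nhds
    · exact hlim
  have h2 : hm - (∫ z in ξ..x, hdd z) = hd ξ := by rw [hFTC]; ring
  refine ⟨?_, h2⟩
  -- First identity
  have hfint : IntegrableOn f (Iio x) := integrable_of_integral_eq_one hfone
  have hsplit : Iio x = Iio ξ ∪ Ico ξ x := by
    ext z; simp [lt_iff_lt_of_le_iff_le, Set.mem_Ico]
    constructor
    · intro h; rcases lt_or_ge z ξ with h'|h' <;> [left; right] <;> simp_all
    · rintro (h|⟨h1,h2⟩); exacts [h.trans hξx, h2]
  have hdisj : Disjoint (Iio ξ) (Ico ξ x) := by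
    simp [Set.disjoint_left]; intro a ha ha'; exact absurd ha' (not_le.2 ha)
  have hmeasIco : MeasurableSet (Ico ξ x) := measurableSet_Ico
  set g : ℝ → ℝ := fun z => (if z < ξ then hm else hm - hdd z / f z) * f z with hg
  have hg1 : IntegrableOn g (Iio ξ) := hginteg.mono_set (by rw [hsplit]; exact subset_union_left)
  have hg2 : IntegrableOn g (Ico ξ x) := hginteg.mono_set (by rw [hsplit]; exact subset_union_right)
  have hunion : (∫ z in Iio x, g z) = (∫ z in Iio ξ, g z) + ∫ z in Ico ξ x, g z := by
    rw [hsplit]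
    exact setIntegral_union hdisj hmeasIco hg1 hg2
  have e1 : (∫ z in Iio ξ, g z) = ∫ z in Iio ξ, hm * f z := by
    refine setIntegral_congr_fun measurableSet_Iio fun z hz => ?_
    simp only [g, if_pos (show z < ξ from hz)]
  have e2 : (∫ z in Ico ξ x, g z) = ∫ z in Ico ξ x, (hm * f z - hdd z) := by
    apply setIntegral_congr_fun hmeasIco
    intro z hz
    have hz' : ¬ z < ξ := not_lt.2 hz.1
    have hf0 : f z ≠ 0 := (hfpos z hz).ne'
    simp only [g, hz', if_false]
    field_simp
  have hf1 : IntegrableOn f (Iio ξ) := hfint.mono_set (by rw [hsplit]; exact subset_union_left)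
  have hf2 : IntegrableOn f (Ico ξ x) := hfint.mono_set (by rw [hsplit]; exact subset_union_right)
  have hfsum : (∫ z in Iio ξ, f z) + (∫ z in Ico ξ x, f z) = 1 := by
    rw [← hfone, hsplit, setIntegral_union hdisj hmeasIco hf1 hf2]
  calc (∫ z in Iio x, g z)
      = (∫ z in Iio ξ, hm * f z) + ∫ z in Ico ξ x, (hm * f z - hdd z) := by
        rw [hunion, e1, e2]
    _ = hm * (∫ z in Iio ξ, f z) + (hm * (∫ z in Ico ξ x, f z) - ∫ z in Ico ξ x, hdd z) := by
        rw [integral_const_mul, integral_sub (hf2.const_mul hm) hint, integral_const_mul]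
    _ = hm * ((∫ z in Iio ξ, f z) + (∫ z in Ico ξ x, f z)) - ∫ z in Ico ξ x, hdd z := by ring
    _ = hm - ∫ z in Ico ξ x, hdd z := by rw [hfsum, mul_one]
    _ = hm - ∫ z in ξ..x, hdd z := by
        rw [intervalIntegral.integral_of_le hξx.le,
          setIntegral_congr_set Ico_ae_eq_Ioc]
    _ = hd ξ := h2
end

section
/- Under the setting of the comparison-based gradient estimator with $\xi < x$: if $g = h'_-(x)$ when $z < \xi$ and $g = h'_-(x) - h''_{x,z}(x,z)/f_-(x,z)$ when $z \ge \xi$ with $z \sim f_-(x,\cdot)$, then $\mathbb{E}_z[g^2] = (h'_-(x))^2 - 2h'_-(x)(h'_-(x) - h'_x(x,\xi)) + \int_{\xi}^{x} \frac{(h''_{x,z}(x,z))^2}{f_-(x,z)}\,dz$, and consequently $\mathbb{E}_z[g^2] \le (h'_x(x,\xi))^2 + \int_{\xi}^{x} \frac{(h''_{x,z}(x,z))^2}{f_-(x,z)}\,dz$. -/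
open MeasureTheory Set

/-- Second moment of the comparison-based gradient estimator when `ξ < x`.
Here `hd z = h'_x(x,z)`, `hdd z = h''_{x,z}(x,z)`, `hm = h'_-(x)`, and
`g z = hm` if `z < ξ`, `g z = hm - hdd z / f z` if `z ≥ ξ`, with `z ∼ f = f_-(x,·)`.
Then `E_z[g²] = hm² - 2 hm (hm - hd ξ) + ∫_ξ^x hdd² / f`, and consequently
`E_z[g²] ≤ (hd ξ)² + ∫_ξ^x hdd² / f`. -/
theorem cba_gradient_second_moment
    (x ξ : ℝ) (hξx : ξ < x)
    (hd hdd : ℝ → ℝ) (hm : ℝ)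
    (hderiv : ∀ z ∈ Ico ξ x, HasDerivAt hd (hdd z) z)
    (hlim : Filter.Tendsto hd (nhdsWithin x (Iio x)) (nhds hm))
    (hint : IntegrableOn hdd (Ico ξ x))
    (f : ℝ → ℝ) (hfmeas : Measurable f)
    (hfnonneg : ∀ z, z < x → 0 ≤ f z)
    (hfpos : ∀ z ∈ Ico ξ x, 0 < f z)
    (hfone : (∫ z in Iio x, f z) = 1)
    (hsqint : IntegrableOn (fun z => (hdd z) ^ 2 / f z) (Ico ξ x))
    (hg2integ : IntegrableOn
      (fun z => (if z < ξ then hm else hm - hdd z / f z) ^ 2 * f z) (Iio x)) :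
    (∫ z in Iio x, (if z < ξ then hm else hm - hdd z / f z) ^ 2 * f z)
        = hm ^ 2 - 2 * hm * (hm - hd ξ) + ∫ z in ξ..x, (hdd z) ^ 2 / f z ∧
      (∫ z in Iio x, (if z < ξ then hm else hm - hdd z / f z) ^ 2 * f z)
        ≤ (hd ξ) ^ 2 + ∫ z in ξ..x, (hdd z) ^ 2 / f z := by
  have hle : ξ ≤ x := hξx.le
  -- FTC step : ∫ z in ξ..x, hdd z = hm - hd ξ
  have hintIcc : IntegrableOn hdd (Icc ξ x) := by
    rwa [integrableOn_Icc_iff_integrableOn_Ico]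
  have huIcc : uIcc ξ x = Icc ξ x := uIcc_of_le hle
  have hcont : ContinuousOn (fun y => ∫ t in ξ..y, hdd t) (Icc ξ x) := by
    have := intervalIntegral.continuousOn_primitive_interval (a := ξ) (b := x)
      (f := hdd) (μ := volume) (by rwa [huIcc])
    rwa [huIcc] at this
  have hxmem : x ∈ Icc ξ x := ⟨hle, le_rfl⟩
  have hT1 : Filter.Tendsto (fun y => ∫ t in ξ..y, hdd t) (nhdsWithin x (Ioo ξ x))
      (nhds (∫ t in ξ..x, hdd t)) :=
    ((hcont x hxmem).tendsto).mono_left (nhdsWithin_mono x Ioo_subset_Icc_self)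
  have heq : ∀ y ∈ Ioo ξ x, (∫ t in ξ..y, hdd t) = hd y - hd ξ := by
    intro y hy
    have hsub : uIcc ξ y ⊆ Ico ξ x := by
      rw [uIcc_of_le hy.1.le]
      exact fun t ht => ⟨ht.1, lt_of_le_of_lt ht.2 hy.2⟩
    refine intervalIntegral.integral_eq_sub_of_hasDerivAt
      (fun t ht => hderiv t (hsub ht)) ?_
    rw [intervalIntegrable_iff_integrableOn_Ioc_of_le hy.1.le]
    exact hint.mono_set fun t ht => ⟨ht.1.le, ht.2.trans_lt hy.2⟩
  have hT2 : Filter.Tendsto (fun y => ∫ t in ξ..y, hdd t) (nhdsWithin x (Ioo ξ x))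
      (nhds (hm - hd ξ)) := by
    have hT2' : Filter.Tendsto (fun y => hd y - hd ξ) (nhdsWithin x (Ioo ξ x))
        (nhds (hm - hd ξ)) :=
      (hlim.mono_left (nhdsWithin_mono x fun t ht => ht.2)).sub_const _
    exact hT2'.congr' (by
      filter_upwards [self_mem_nhdsWithin] with y hy using (heq y hy).symm)
  haveI : (nhdsWithin x (Ioo ξ x)).NeBot := right_nhdsWithin_Ioo_neBot hξx
  have hFTC : (∫ t in ξ..x, hdd t) = hm - hd ξ := tendsto_nhds_unique hT1 hT2
  -- integrability of f
  have hfint : IntegrableOn f (Iio x) := by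
    by_contra h
    rw [integral_undef h] at hfone
    norm_num at hfone
  have hfintIco : IntegrableOn f (Ico ξ x) :=
    hfint.mono_set (fun t ht => ht.2)
  have hfintIio : IntegrableOn f (Iio ξ) :=
    hfint.mono_set (fun t ht => lt_trans ht hξx)
  -- split the integral
  have hsplit : (∫ z in Iio x, (if z < ξ then hm else hm - hdd z / f z) ^ 2 * f z)
      = (∫ z in Iio ξ, (if z < ξ then hm else hm - hdd z / f z) ^ 2 * f z)
        + ∫ z in Ico ξ x, (if z < ξ then hm else hm - hdd z / f z) ^ 2 * f z := by
    rw [← setIntegral_union (((Iio_disjoint_Ici le_rfl).mono_right Ico_subset_Ici_self)) measurableSet_Ico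
      (hg2integ.mono_set (fun t ht => lt_trans ht hξx))
      (hg2integ.mono_set (fun t ht => ht.2)), Iio_union_Ico_eq_Iio hle]
  have h1 : (∫ z in Iio ξ, (if z < ξ then hm else hm - hdd z / f z) ^ 2 * f z)
      = hm ^ 2 * ∫ z in Iio ξ, f z := by
    rw [← integral_const_mul]
    refine setIntegral_congr_fun measurableSet_Iio fun z hz => ?_
    simp [if_pos (mem_Iio.mp hz)]
  have h2 : (∫ z in Ico ξ x, (if z < ξ then hm else hm - hdd z / f z) ^ 2 * f z)
      = ∫ z in Ico ξ x, (hm ^ 2 * f z - 2 * hm * hdd z + (hdd z) ^ 2 / f z) := by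
    refine setIntegral_congr_fun measurableSet_Ico fun z hz => ?_
    have hfz : f z ≠ 0 := (hfpos z hz).ne'
    rw [if_neg (not_lt.mpr hz.1)]
    field_simp
    ring
  have h3 : (∫ z in Ico ξ x, (hm ^ 2 * f z - 2 * hm * hdd z + (hdd z) ^ 2 / f z))
      = hm ^ 2 * (∫ z in Ico ξ x, f z) - 2 * hm * (∫ z in Ico ξ x, hdd z)
        + ∫ z in Ico ξ x, (hdd z) ^ 2 / f z := by
    have hA : IntegrableOn (fun z => hm ^ 2 * f z - 2 * hm * hdd z) (Ico ξ x) :=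
      (hfintIco.const_mul _).sub (hint.const_mul _)
    rw [integral_add hA hsqint,
      integral_sub (hfintIco.const_mul (hm ^ 2)) (hint.const_mul (2 * hm)),
      integral_const_mul, integral_const_mul]
  have hIcoIoc : ∀ g : ℝ → ℝ, (∫ z in Ico ξ x, g z) = ∫ z in ξ..x, g z := by
    intro g
    rw [intervalIntegral.integral_of_le hle, integral_Ico_eq_integral_Ioo, ← integral_Ioc_eq_integral_Ioo]
  have hfsum : (∫ z in Iio ξ, f z) + (∫ z in Ico ξ x, f z) = 1 := by
    rw [← setIntegral_union (((Iio_disjoint_Ici le_rfl).mono_right Ico_subset_Ici_self)) measurableSet_Ico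
      hfintIio hfintIco, Iio_union_Ico_eq_Iio hle, hfone]
  have hIdd : (∫ z in Ico ξ x, hdd z) = hm - hd ξ := by
    rw [hIcoIoc, hFTC]
  have key : (∫ z in Iio x, (if z < ξ then hm else hm - hdd z / f z) ^ 2 * f z)
      = hm ^ 2 - 2 * hm * (hm - hd ξ) + ∫ z in ξ..x, (hdd z) ^ 2 / f z := by
    rw [hsplit, h1, h2, h3, hIdd, ← hIcoIoc fun z => (hdd z) ^ 2 / f z]
    nlinarith [hfsum]
  refine ⟨key, ?_⟩
  rw [key]
  nlinarith [sq_nonneg (hm - hd ξ)]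
end

section
/- Let $H$ be $\mu$-strongly convex ($\mu > 0$) on $[\ell,u]$ with minimizer $x^*$, and consider a multi-stage algorithm where stage $k$ runs $T_k = 2^{k+3}$ iterations of projected SGD with constant step size $\eta_k = \frac{1}{2^{k+1}\mu}$ starting from $\hat{x}^k$, outputting $\hat{x}^{k+1}$ satisfying $\mathbb{E}_k[H(\hat{x}^{k+1}) - H(x^*)] \le \frac{(\hat{x}^k - x^*)^2}{2\eta_k T_k} + \frac{\eta_k G^2}{2}$. Define $\Delta_k = H(\hat{x}^k) - H(x^*)$. Then by induction, $\mathbb{E}[\Delta_k] \le \frac{\Delta_1 + G^2/\mu}{2^{k-1}}$ for all $k \ge 1$, and after $K$ stages with a total of $T = \sum_{k=1}^K T_k$ iterations, $\mathbb{E}[H(\hat{x}^{K+1}) - H(x^*)] \le \frac{16(\Delta_1 + G^2/\mu)}{T}$. -/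
open MeasureTheory Set Finset

/-!
Strong convexity together with first-order optimality of `x*` gives quadratic growth,
`μ/2 (x - x*)² ≤ H x - H x*`. With `η_k = 1/(2^{k+1} μ)` and `T_k = 2^{k+3}`, the stage
guarantee therefore becomes, after taking expectations,
`E Δ_{k+1} ≤ E Δ_k / 4 + G²/(μ 2^{k+2})`: the distance term contracts by `4` while the noise
term only halves, and induction gives `E Δ_k ≤ (Δ₁ + G²/μ)/2^{k-1}`. Finally
`T = 2^{K+4} - 16 < 2^{K+4}`, which turns `1/2^K` into `16/T`.
-/

theorem ContinuousOn.integrable_comp_of_mapsTo {α Ω : Type*} [TopologicalSpace α]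
    [MeasurableSpace α] [OpensMeasurableSpace α] {m : MeasurableSpace Ω} {μ : Measure Ω}
    [IsFiniteMeasure μ] {f : α → ℝ} {s : Set α} (hs : IsCompact s) (hf : ContinuousOn f s)
    {X : Ω → α} (hX : Measurable X) (hXs : ∀ ω, X ω ∈ s) :
    Integrable (fun ω => f (X ω)) μ := by
  obtain ⟨C, hC⟩ := hs.exists_bound_of_continuousOn hf
  have hmeas : Measurable (fun ω => s.domRestrict f ⟨X ω, hXs ω⟩) :=
    hf.domRestrict.measurable.comp hX.subtype_mk
  exact Integrable.of_bound hmeas.aestronglyMeasurable C (ae_of_all _ fun ω => hC _ (hXs ω))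

theorem IsMinOn.hasDerivWithinAt_mul_sub_nonneg {s : Set ℝ} (hs : Convex ℝ s) {f : ℝ → ℝ}
    {f' a x : ℝ} (hmin : IsMinOn f s a) (ha : a ∈ s) (hf : HasDerivWithinAt f f' s a)
    (hx : x ∈ s) : 0 ≤ f' * (x - a) := by
  have htan : x - a ∈ posTangentConeAt s a :=
    sub_mem_posTangentConeAt_of_segment_subset (hs.segment_subset ha hx)
  simpa [mul_comm] using hmin.localize.hasFDerivWithinAt_nonneg hf htan

theorem integral_le_of_condExp_le {Ω : Type*} {m m0 : MeasurableSpace Ω} {μ : Measure Ω}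
    [IsFiniteMeasure μ] (hm : m ≤ m0) {f g : Ω → ℝ} (hg : Integrable g μ)
    (h : μ[f|m] ≤ᵐ[μ] g) : ∫ ω, f ω ∂μ ≤ ∫ ω, g ω ∂μ :=
  (integral_condExp hm).symm.trans_le (integral_mono_ae integrable_condExp hg h)

theorem le_div_two_pow_of_le_div_four_add {a : ℕ → ℝ} {g D : ℝ} (hgD : g ≤ 2 * D)
    (h0 : a 0 ≤ D) (hrec : ∀ n, a (n + 1) ≤ a n / 4 + g / 2 ^ (n + 3)) (n : ℕ) :
    a n ≤ D / 2 ^ n := by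
  induction n with
  | zero => simpa using h0
  | succ n ih =>
    calc a (n + 1) ≤ a n / 4 + g / 2 ^ (n + 3) := hrec n
      _ ≤ D / 2 ^ n / 4 + 2 * D / 2 ^ (n + 3) := by gcongr
      _ = D / 2 ^ (n + 1) := by rw [pow_add, pow_succ]; ring

theorem sum_Icc_two_pow_add_three (n : ℕ) :
    ∑ k ∈ Icc 1 n, (2:ℝ) ^ (k + 3) = 2 ^ (n + 4) - 16 := by
  induction n with
  | zero => norm_num
  | succ n ih => rw [sum_Icc_succ_top (by omega), ih]; ring

theorem div_two_pow_le_sixteen_mul_div_sum {D : ℝ} (hD : 0 ≤ D) {K : ℕ} (hK : 1 ≤ K) :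
    D / 2 ^ K ≤ 16 * D / ∑ k ∈ Icc 1 K, (2:ℝ) ^ (k + 3) := by
  have h32 : (32:ℝ) ≤ 2 ^ (K + 4) :=
    calc (32:ℝ) = 2 ^ (1 + 4) := by norm_num
      _ ≤ 2 ^ (K + 4) := pow_le_pow_right₀ (by norm_num) (by omega)
  calc D / 2 ^ K = 16 * D / 2 ^ (K + 4) := by rw [pow_add]; ring
    _ ≤ 16 * D / ∑ k ∈ Icc 1 K, (2:ℝ) ^ (k + 3) := by rw [sum_Icc_two_pow_add_three]; gcongr <;> linarith

theorem sgd_stage_bound_le {mu G y Δ : ℝ} (hmu : 0 < mu) (hy : mu / 2 * y ^ 2 ≤ Δ) (k : ℕ) :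
    y ^ 2 / (2 * (1 / ((2:ℝ) ^ (k + 1) * mu)) * (2:ℝ) ^ (k + 3))
      + (1 / ((2:ℝ) ^ (k + 1) * mu)) * G ^ 2 / 2 ≤ Δ / 4 + G ^ 2 / mu / 2 ^ (k + 2) := by
  have hstep : 2 * (1 / ((2:ℝ) ^ (k + 1) * mu)) * (2:ℝ) ^ (k + 3) = 8 / mu := by
    rw [pow_add _ k 3, pow_succ]; field_simp; norm_num
  have hbias : (1 / ((2:ℝ) ^ (k + 1) * mu)) * G ^ 2 / 2 = G ^ 2 / mu / 2 ^ (k + 2) := by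
    rw [pow_succ _ (k + 1)]; field_simp
  have hvar : y ^ 2 / (8 / mu) = mu / 2 * y ^ 2 / 4 := by field_simp; ring
  rw [hstep, hbias, hvar]
  linarith

theorem integral_le_div_four_add_of_condExp_le {Ω : Type*} {m m0 : MeasurableSpace Ω}
    {μ : Measure Ω} [IsProbabilityMeasure μ] (hm : m ≤ m0) {f Δ d : Ω → ℝ} {mu G : ℝ} {k : ℕ}
    (hmu : 0 < mu) (hΔ : Integrable Δ μ) (hgrowth : ∀ ω, mu / 2 * d ω ^ 2 ≤ Δ ω)
    (hf : μ[f|m] ≤ᵐ[μ] fun ω => d ω ^ 2 / (2 * (1 / ((2:ℝ) ^ (k + 1) * mu)) * (2:ℝ) ^ (k + 3))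
      + (1 / ((2:ℝ) ^ (k + 1) * mu)) * G ^ 2 / 2) :
    ∫ ω, f ω ∂μ ≤ (∫ ω, Δ ω ∂μ) / 4 + G ^ 2 / mu / 2 ^ (k + 2) := by
  have hbound := integral_le_of_condExp_le hm ((hΔ.div_const 4).add (integrable_const _))
    (hf.trans (ae_of_all _ fun ω => sgd_stage_bound_le hmu (hgrowth ω) k))
  simpa [integral_add (hΔ.div_const 4) (integrable_const _), integral_div] using hbound

theorem mcba_restart_rate_general
    {Ω : Type*} {m0 : MeasurableSpace Ω} {μ : Measure Ω} [IsProbabilityMeasure μ]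
    (𝒢 : Filtration ℕ m0)
    (ℓ u : ℝ)
    (H H' : ℝ → ℝ) (mu G : ℝ) (hmu : 0 < mu)
    (hderiv : ∀ y ∈ Icc ℓ u, HasDerivWithinAt H (H' y) (Icc ℓ u) y)
    (hsc : ∀ x₁ ∈ Icc ℓ u, ∀ x₂ ∈ Icc ℓ u,
      H x₁ + H' x₁ * (x₂ - x₁) + mu / 2 * (x₂ - x₁) ^ 2 ≤ H x₂)
    (xstar : ℝ) (hxs : xstar ∈ Icc ℓ u) (hmin : ∀ y ∈ Icc ℓ u, H xstar ≤ H y)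
    (xh : ℕ → Ω → ℝ) (x1 : ℝ)
    (hstart : ∀ ω, xh 1 ω = x1)
    (hmem : ∀ k ω, xh k ω ∈ Icc ℓ u)
    (hadapt : ∀ k, StronglyMeasurable[𝒢 k] (xh k))
    (hstage : ∀ k, 1 ≤ k →
      μ[(fun ω => H (xh (k + 1) ω) - H xstar) | 𝒢 k]
        ≤ᵐ[μ] fun ω =>
          (xh k ω - xstar) ^ 2 / (2 * (1 / ((2:ℝ) ^ (k + 1) * mu)) * (2:ℝ) ^ (k + 3))
            + (1 / ((2:ℝ) ^ (k + 1) * mu)) * G ^ 2 / 2)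
    (K : ℕ) (hK : 1 ≤ K) :
    (∀ k, 1 ≤ k →
        (∫ ω, (H (xh k ω) - H xstar) ∂μ)
          ≤ ((H x1 - H xstar) + G ^ 2 / mu) / 2 ^ (k - 1)) ∧
      (∫ ω, (H (xh (K + 1) ω) - H xstar) ∂μ)
        ≤ 16 * ((H x1 - H xstar) + G ^ 2 / mu)
            / (∑ k ∈ Finset.Icc 1 K, ((2:ℝ) ^ (k + 3))) := by
  have hgap_int (k : ℕ) : Integrable (fun ω => H (xh k ω) - H xstar) μ :=
    (ContinuousOn.integrable_comp_of_mapsTo isCompact_Icc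
      (fun y hy => (hderiv y hy).continuousWithinAt)
      ((hadapt k).mono (𝒢.le k)).measurable (hmem k)).sub (integrable_const _)
  have hgrowth (k : ℕ) (ω : Ω) : mu / 2 * (xh k ω - xstar) ^ 2 ≤ H (xh k ω) - H xstar := by
    have hfirst := IsMinOn.hasDerivWithinAt_mul_sub_nonneg (convex_Icc ℓ u) hmin hxs
      (hderiv xstar hxs) (hmem k ω)
    linarith [hsc xstar hxs (xh k ω) (hmem k ω)]
  obtain ⟨ω₀⟩ := nonempty_of_isProbabilityMeasure μ
  have hgap₁ : 0 ≤ H x1 - H xstar := sub_nonneg.2 (hmin x1 (hstart ω₀ ▸ hmem 1 ω₀))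
  have hG : 0 ≤ G ^ 2 / mu := by positivity
  have hrate (n : ℕ) :
      ∫ ω, (H (xh (n + 1) ω) - H xstar) ∂μ ≤ ((H x1 - H xstar) + G ^ 2 / mu) / 2 ^ n :=
    le_div_two_pow_of_le_div_four_add (a := fun n => ∫ ω, (H (xh (n + 1) ω) - H xstar) ∂μ)
      (by linarith) (by simp [hstart, hG])
      (fun n => integral_le_div_four_add_of_condExp_le (𝒢.le _) hmu (hgap_int _) (hgrowth _)
        (hstage (n + 1) (by omega))) n
  refine ⟨fun k hk => ?_, (hrate K).trans (div_two_pow_le_sixteen_mul_div_sum (by positivity) hK)⟩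
  obtain ⟨n, rfl⟩ := Nat.exists_eq_add_of_le' hk
  simpa using hrate n

/-- Multi-stage restarting (MCBA) under Assumption A5(a): `H` is `μ`-strongly convex
(`μ > 0`) on `[ℓ,u]` with minimizer `x*`; stage `k` runs `T_k = 2^{k+3}` iterations of
projected SGD with constant step size `η_k = 1/(2^{k+1} μ)` from `x̂^k`, returning
`x̂^{k+1}` with `E_k[H(x̂^{k+1}) - H(x*)] ≤ (x̂^k - x*)²/(2 η_k T_k) + η_k G²/2`.
With `Δ_k = H(x̂^k) - H(x*)`, one gets `E[Δ_k] ≤ (Δ_1 + G²/μ)/2^{k-1}` for all `k ≥ 1`,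
and after `K` stages, with `T = ∑_{k=1}^K T_k`,
`E[H(x̂^{K+1}) - H(x*)] ≤ 16 (Δ_1 + G²/μ)/T`. -/
theorem mcba_restart_rate
    {Ω : Type*} {m0 : MeasurableSpace Ω} {μ : Measure Ω} [IsProbabilityMeasure μ]
    (𝒢 : Filtration ℕ m0)
    (ℓ u : ℝ) (hlu : ℓ ≤ u)
    (H H' : ℝ → ℝ) (mu G : ℝ) (hmu : 0 < mu)
    (hderiv : ∀ y ∈ Icc ℓ u, HasDerivWithinAt H (H' y) (Icc ℓ u) y)
    (hsc : ∀ x₁ ∈ Icc ℓ u, ∀ x₂ ∈ Icc ℓ u,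
      H x₁ + H' x₁ * (x₂ - x₁) + mu / 2 * (x₂ - x₁) ^ 2 ≤ H x₂)
    (xstar : ℝ) (hxs : xstar ∈ Icc ℓ u) (hmin : ∀ y ∈ Icc ℓ u, H xstar ≤ H y)
    (xh : ℕ → Ω → ℝ) (x1 : ℝ)
    (hstart : ∀ ω, xh 1 ω = x1)
    (hmem : ∀ k ω, xh k ω ∈ Icc ℓ u)
    (hadapt : ∀ k, StronglyMeasurable[𝒢 k] (xh k))
    (hstage : ∀ k, 1 ≤ k →
      μ[(fun ω => H (xh (k + 1) ω) - H xstar) | 𝒢 k]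
        ≤ᵐ[μ] fun ω =>
          (xh k ω - xstar) ^ 2 / (2 * (1 / ((2:ℝ) ^ (k + 1) * mu)) * (2:ℝ) ^ (k + 3))
            + (1 / ((2:ℝ) ^ (k + 1) * mu)) * G ^ 2 / 2)
    (K : ℕ) (hK : 1 ≤ K) :
    (∀ k, 1 ≤ k →
        (∫ ω, (H (xh k ω) - H xstar) ∂μ)
          ≤ ((H x1 - H xstar) + G ^ 2 / mu) / 2 ^ (k - 1)) ∧
      (∫ ω, (H (xh (K + 1) ω) - H xstar) ∂μ)
        ≤ 16 * ((H x1 - H xstar) + G ^ 2 / mu)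
            / (∑ k ∈ Finset.Icc 1 K, ((2:ℝ) ^ (k + 3))) :=
  mcba_restart_rate_general 𝒢 ℓ u H H' mu G hmu hderiv hsc xstar hxs hmin xh x1 hstart hmem hadapt
    hstage K hK
end

section
/- Let $Q$ be a symmetric positive definite $d \times d$ matrix, $x, \xi \in \mathbb{R}^d$, and let $u$ be a random vector with $\mathbb{E}[uu^\top] = I_d$. Let $z \ge 0$ be drawn (independently of $u$) from a density $f$ on $[0,\infty)$ that is positive wherever needed. Define $h(y) = \frac{1}{2}(y - \xi)^\top Q (y - \xi)$ and the estimator: if $h(x + zu) < h(x - zu)$ set $g = -\frac{1}{2}\frac{u^\top Q u}{f(z)} u$ when $h(x+zu) \le h(x)$ and $g = 0$ otherwise; if $h(x+zu) \ge h(x-zu)$ set $g = \frac{1}{2}\frac{u^\top Q u}{f(z)} u$ when $h(x-zu) \le h(x)$ and $g = 0$ otherwise. Then $\mathbb{E}_{z,u}[g] = Q(x - \xi) = \nabla h(x)$. -/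
open MeasureTheory Matrix Set

/-! Along the ray through `x` in direction `u`, `h (x ± z u) - h x = ± z a + z² b / 2` with
`a = uᵀQ(x - ξ)` and `b = uᵀQu > 0`. So the first comparison reads off the sign of `a`, the second
one keeps exactly the window `z ≤ 2|a|/b`, and after the factor `1 / f z` cancels the density the
`z`-integral is `(2|a|/b) · (± b/2) = a`. Averaging `a u = u uᵀ Q (x - ξ)` over `u` with
`E[u uᵀ] = I` gives `Q (x - ξ)`. -/

theorem Matrix.IsSymm.dotProduct_mulVec_comm {n R : Type*} [Fintype n] [CommSemiring R]
    {Q : Matrix n n R} (hQ : Q.IsSymm) (v w : n → R) :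
    v ⬝ᵥ Q *ᵥ w = w ⬝ᵥ Q *ᵥ v := by
  rw [dotProduct_mulVec, ← mulVec_transpose, hQ.eq, dotProduct_comm]

theorem Matrix.IsSymm.add_smul_dotProduct_mulVec_add_smul {n R : Type*} [Fintype n] [CommRing R]
    {Q : Matrix n n R} (hQ : Q.IsSymm) (v u : n → R) (s : R) :
    (v + s • u) ⬝ᵥ Q *ᵥ (v + s • u) =
      v ⬝ᵥ Q *ᵥ v + 2 * s * (u ⬝ᵥ Q *ᵥ v) + s ^ 2 * (u ⬝ᵥ Q *ᵥ u) := by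
  simp only [mulVec_add, mulVec_smul, dotProduct_add, add_dotProduct, dotProduct_smul,
    smul_dotProduct, smul_eq_mul, hQ.dotProduct_mulVec_comm v u]
  ring

theorem integral_dotProduct_mul_apply {ι Ω : Type*} [Fintype ι] [DecidableEq ι]
    [MeasurableSpace Ω] (ν : Measure Ω) (U : Ω → ι → ℝ)
    (hUmom : ∀ i j, (∫ ω, U ω i * U ω j ∂ν) = if i = j then 1 else 0)
    (hUint : ∀ i j, Integrable (fun ω => U ω i * U ω j) ν) (w : ι → ℝ) (i : ι) :
    ∫ ω, (U ω ⬝ᵥ w) * U ω i ∂ν = w i := by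
  calc ∫ ω, (U ω ⬝ᵥ w) * U ω i ∂ν = ∫ ω, ∑ j, w j * (U ω j * U ω i) ∂ν := by
        congr 1 with ω
        simp only [dotProduct, Finset.sum_mul]
        exact Finset.sum_congr rfl fun j _ => by ring
    _ = ∑ j, w j * ∫ ω, U ω j * U ω i ∂ν := by
        rw [integral_finsetSum _ fun j _ => (hUint j i).const_mul (w j)]
        simp_rw [integral_const_mul]
    _ = w i := by simp [hUmom]

theorem setIntegral_Ici_indicator_Iic {c : ℝ} (hc : 0 ≤ c) (k : ℝ) :
    ∫ z in Ici 0, (Iic c).indicator (fun _ => k) z = c * k := by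
  rw [setIntegral_indicator measurableSet_Iic, Ici_inter_Iic, setIntegral_const,
    Real.volume_real_Icc_of_le hc, sub_zero, smul_eq_mul]

/-- The estimator times `f z`, as a multiple of `u`, in terms of the increments
`dp = h (x + z u) - h x`, `dm = h (x - z u) - h x` and `b = uᵀQu`. -/
noncomputable def comparisonWeight (dp dm b : ℝ) : ℝ :=
  if dp < dm then (if dp ≤ 0 then -(b / 2) else 0) else (if dm ≤ 0 then b / 2 else 0)

theorem comparisonWeight_quadratic {a b z : ℝ} (hb : 0 < b) (hz : 0 < z) :
    comparisonWeight (z * a + z ^ 2 / 2 * b) ((-z) * a + (-z) ^ 2 / 2 * b) b =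
      if a < 0 then (Iic (-2 * a / b)).indicator (fun _ => -(b / 2)) z
      else (Iic (2 * a / b)).indicator (fun _ => b / 2) z := by
  have hlt : z * a + z ^ 2 / 2 * b < (-z) * a + (-z) ^ 2 / 2 * b ↔ a < 0 := by
    constructor <;> intro <;> nlinarith
  have hp : z * a + z ^ 2 / 2 * b ≤ 0 ↔ z ≤ -2 * a / b := by
    rw [le_div_iff₀ hb]; constructor <;> intro <;> nlinarith
  have hm : (-z) * a + (-z) ^ 2 / 2 * b ≤ 0 ↔ z ≤ 2 * a / b := by
    rw [le_div_iff₀ hb]; constructor <;> intro <;> nlinarith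
  simp only [comparisonWeight, hlt, hp, hm, indicator_apply, mem_Iic]

theorem integral_comparisonWeight_quadratic (a : ℝ) {b : ℝ} (hb : 0 < b) :
    ∫ z in Ici 0, comparisonWeight (z * a + z ^ 2 / 2 * b) ((-z) * a + (-z) ^ 2 / 2 * b) b
      = a := by
  rw [integral_Ici_eq_integral_Ioi, setIntegral_congr_fun measurableSet_Ioi
    fun z hz => comparisonWeight_quadratic hb hz, ← integral_Ici_eq_integral_Ioi]
  by_cases ha : a < 0
  · simp only [if_pos ha]
    rw [setIntegral_Ici_indicator_Iic (div_nonneg (by linarith) hb.le)]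
    field_simp
  · simp only [if_neg ha]
    rw [setIntegral_Ici_indicator_Iic (div_nonneg (by linarith) hb.le)]
    field_simp

theorem cbaqp_unbiased_general
    {d : ℕ} {Ω : Type*} [MeasurableSpace Ω] (ν : Measure Ω)
    (U : Ω → (Fin d → ℝ))
    (Q : Matrix (Fin d) (Fin d) ℝ) (hQpos : Q.PosDef)
    (x ξ : Fin d → ℝ)
    (f : ℝ → ℝ) (hfpos : ∀ z, 0 ≤ z → 0 < f z)
    (hUmom : ∀ i j, (∫ ω, U ω i * U ω j ∂ν) = if i = j then 1 else 0)
    (hUint : ∀ i j, Integrable (fun ω => U ω i * U ω j) ν)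
    (h : (Fin d → ℝ) → ℝ)
    (hdef : ∀ y, h y = 1 / 2 * ((y - ξ) ⬝ᵥ Q.mulVec (y - ξ)))
    (g : (Fin d → ℝ) → ℝ → (Fin d → ℝ))
    (hg : ∀ u z, g u z =
      if h (x + z • u) < h (x - z • u) then
        (if h (x + z • u) ≤ h x then (-(1 / 2) * (u ⬝ᵥ Q.mulVec u) / f z) • u else 0)
      else
        (if h (x - z • u) ≤ h x then (1 / 2 * (u ⬝ᵥ Q.mulVec u) / f z) • u else 0)) :
    ∀ i, (∫ ω, (∫ z in Ici (0:ℝ), g (U ω) z i * f z) ∂ν) = Q.mulVec (x - ξ) i := by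
  intro i
  have hQ : Q.IsSymm := isHermitian_iff_isSymm.mp hQpos.isHermitian
  have hray : ∀ u s, h (x + s • u) =
      h x + (s * (u ⬝ᵥ Q *ᵥ (x - ξ)) + s ^ 2 / 2 * (u ⬝ᵥ Q *ᵥ u)) := by
    intro u s
    rw [hdef, hdef, add_sub_right_comm, hQ.add_smul_dotProduct_mulVec_add_smul]
    ring
  have hinner : ∀ u, ∫ z in Ici 0, g u z i * f z = (u ⬝ᵥ Q *ᵥ (x - ξ)) * u i := by
    intro u
    have hweight : ∀ z ∈ Ici (0:ℝ), g u z i * f z =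
        comparisonWeight (z * (u ⬝ᵥ Q *ᵥ (x - ξ)) + z ^ 2 / 2 * (u ⬝ᵥ Q *ᵥ u))
          ((-z) * (u ⬝ᵥ Q *ᵥ (x - ξ)) + (-z) ^ 2 / 2 * (u ⬝ᵥ Q *ᵥ u)) (u ⬝ᵥ Q *ᵥ u) * u i := by
      intro z hz
      have hfz := (hfpos z hz).ne'
      rw [hg, sub_eq_add_neg x, ← neg_smul, hray, hray]
      simp only [comparisonWeight, add_lt_add_iff_left, add_le_iff_nonpos_right]
      split_ifs <;> simp <;> field_simp
    rw [setIntegral_congr_fun measurableSet_Ici hweight, integral_mul_const]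
    rcases eq_or_ne u 0 with rfl | hu
    · simp
    · rw [integral_comparisonWeight_quadratic _ (by simpa using hQpos.dotProduct_mulVec_pos hu)]
  simp_rw [hinner]
  exact integral_dotProduct_mul_apply ν U hUmom hUint _ i

/-- Unbiasedness of the quadratic comparison-based gradient estimator (CBA-QP):
for `h(y) = ½ (y-ξ)ᵀ Q (y-ξ)` with `Q` symmetric positive definite, a random direction
`u` with `E[uuᵀ] = I_d`, and `z ≥ 0` drawn independently from a density `f` on `[0,∞)`,
the estimator `g` (defined via the two comparisons in Algorithm CBA-QP) satisfies
`E_{z,u}[g] = Q(x - ξ) = ∇h(x)`. -/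
theorem cbaqp_unbiased
    {d : ℕ} {Ω : Type*} [MeasurableSpace Ω] (ν : Measure Ω) [IsProbabilityMeasure ν]
    (U : Ω → (Fin d → ℝ))
    (Q : Matrix (Fin d) (Fin d) ℝ) (hQsym : Q.IsSymm) (hQpos : Q.PosDef)
    (x ξ : Fin d → ℝ)
    (f : ℝ → ℝ) (hfmeas : Measurable f) (hfpos : ∀ z, 0 ≤ z → 0 < f z)
    (hfone : (∫ z in Ici (0:ℝ), f z) = 1)
    (hUmom : ∀ i j, (∫ ω, U ω i * U ω j ∂ν) = if i = j then 1 else 0)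
    (hUint : ∀ i j, Integrable (fun ω => U ω i * U ω j) ν)
    (h : (Fin d → ℝ) → ℝ)
    (hdef : ∀ y, h y = 1 / 2 * ((y - ξ) ⬝ᵥ Q.mulVec (y - ξ)))
    (g : (Fin d → ℝ) → ℝ → (Fin d → ℝ))
    (hg : ∀ u z, g u z =
      if h (x + z • u) < h (x - z • u) then
        (if h (x + z • u) ≤ h x then (-(1 / 2) * (u ⬝ᵥ Q.mulVec u) / f z) • u else 0)
      else
        (if h (x - z • u) ≤ h x then (1 / 2 * (u ⬝ᵥ Q.mulVec u) / f z) • u else 0)) :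
    ∀ i, (∫ ω, (∫ z in Ici (0:ℝ), g (U ω) z i * f z) ∂ν) = Q.mulVec (x - ξ) i :=
  cbaqp_unbiased_general ν U Q hQpos x ξ f hfpos hUmom hUint h hdef g hg
end
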